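/- Let d, T be positive integers and let L, M ∈ 𝕃. Then min_{O ∈ 𝕆} ‖L − MO‖_F² = ‖L‖_F² + ‖M‖_F² − 2 ∑_{t=1}^T tr( ( ((MᵀL)_{t,t})ᵀ (MᵀL)_{t,t} )^{1/2} ), where (MᵀL)_{t,t} ∈ ℝ^{d×d} denotes the t-th diagonal block of MᵀL; i.e., the optimal Procrustes value subtracts twice the sum over t of the nuclear norms of the diagonal blocks (MᵀL)_{t,t}. -/

import Mathlib

open Matrix

/-- Squared Frobenius norm of a real matrix: `‖A‖_F² = tr(Aᵀ A)`. -/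
noncomputable def frobSq {m n : Type*} [Fintype m] [Fintype n] (A : Matrix m n ℝ) : ℝ :=
  Matrix.trace (Aᵀ * A)

/-- `O ∈ O(d)`: a real orthogonal matrix. -/
def IsOrth {d : ℕ} (O : Matrix (Fin d) (Fin d) ℝ) : Prop :=
  O * Oᵀ = 1 ∧ Oᵀ * O = 1

/-- `L ∈ 𝕃`: block-lower triangular w.r.t. `T` blocks of size `d`
(indices are pairs `(i, t)` with `i : Fin d` the within-block index and `t : Fin T`
the block index); the block `L_{t,s}` vanishes for `t < s`. -/
def BlockLT {d T : ℕ} (L : Matrix (Fin d × Fin T) (Fin d × Fin T) ℝ) : Prop :=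
  ∀ p q : Fin d × Fin T, p.2 < q.2 → L p q = 0

/-- `O ∈ 𝕆`: block-diagonal with orthogonal `d × d` diagonal blocks. -/
def BlockOrth {d T : ℕ} (O : Matrix (Fin d × Fin T) (Fin d × Fin T) ℝ) : Prop :=
  ∃ f : Fin T → Matrix (Fin d) (Fin d) ℝ, (∀ t, IsOrth (f t)) ∧ O = Matrix.blockDiagonal f

/-- Truncated `t`-th column `L̃_t ∈ ℝ^{(T−t)d×d}` (0-based `t`): the rows of the `t`-th block
column of `L` from block row `t` on. -/
def truncCol {d T : ℕ} (L : Matrix (Fin d × Fin T) (Fin d × Fin T) ℝ) (t : Fin T) :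
    Matrix (Fin (T - t.val) × Fin d) (Fin d) ℝ :=
  fun p j => L (p.2, ⟨t.val + p.1.val, by have := p.1.isLt; omega⟩) (j, t)

/-- Column covariance `Σ̃_t^L = L̃_t L̃_tᵀ`. -/
noncomputable def colCov {d T : ℕ} (L : Matrix (Fin d × Fin T) (Fin d × Fin T) ℝ) (t : Fin T) :
    Matrix (Fin (T - t.val) × Fin d) (Fin (T - t.val) × Fin d) ℝ :=
  truncCol L t * (truncCol L t)ᵀ

/-- The positive semidefinite square root of a PSD matrix (junk value `0` otherwise). -/
noncomputable def sqrtPSD {n : Type*} [Fintype n] [DecidableEq n] (P : Matrix n n ℝ) :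
    Matrix n n ℝ :=
  by classical exact if h : P.PosSemidef then
    h.1.eigenvectorUnitary.1 * diagonal ((RCLike.ofReal : ℝ → ℝ) ∘ Real.sqrt ∘ h.1.eigenvalues) *
      (star h.1.eigenvectorUnitary : Matrix n n ℝ) else 0

/-- The Bures–Wasserstein distance between (PSD) matrices. -/
noncomputable def dBW {n : Type*} [Fintype n] [DecidableEq n] (S1 S2 : Matrix n n ℝ) : ℝ :=
  Real.sqrt (Matrix.trace S1 + Matrix.trace S2 -
    2 * Matrix.trace (sqrtPSD (sqrtPSD S2 * S1 * sqrtPSD S2)))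

/-- The `t`-th diagonal `d × d` block of a `dT × dT` matrix. -/
def diagBlock {d T : ℕ} (C : Matrix (Fin d × Fin T) (Fin d × Fin T) ℝ) (t : Fin T) :
    Matrix (Fin d) (Fin d) ℝ :=
  fun i j => C (i, t) (j, t)


variable {d : ℕ}

lemma IsOrth.mul {A B : Matrix (Fin d) (Fin d) ℝ} (hA : IsOrth A) (hB : IsOrth B) :
    IsOrth (A * B) := by
  constructor
  · rw [transpose_mul, mul_assoc, ← mul_assoc B, hB.1, one_mul, hA.1]
  · rw [transpose_mul, mul_assoc, ← mul_assoc Aᵀ, hA.2, one_mul, hB.2]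

lemma IsOrth.transpose {A : Matrix (Fin d) (Fin d) ℝ} (hA : IsOrth A) : IsOrth Aᵀ := by
  refine ⟨?_, ?_⟩ <;> rw [transpose_transpose] <;> [exact hA.2; exact hA.1]

lemma exists_svd (C : Matrix (Fin d) (Fin d) ℝ) :
    ∃ (W V : Matrix (Fin d) (Fin d) ℝ) (σ : Fin d → ℝ),
      IsOrth W ∧ IsOrth V ∧ (∀ i, 0 ≤ σ i) ∧ C = W * Matrix.diagonal σ * Vᵀ ∧
      Matrix.trace (sqrtPSD (Cᵀ * C)) = ∑ i, σ i := by
  classical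
  have hP : (Cᵀ * C).PosSemidef := by
    have := Matrix.posSemidef_conjTranspose_mul_self C
    rwa [conjTranspose_eq_transpose_of_trivial] at this
  have hA : (Cᵀ * C).IsHermitian := hP.isHermitian
  set V : Matrix (Fin d) (Fin d) ℝ := (hA.eigenvectorUnitary : Matrix (Fin d) (Fin d) ℝ) with hV
  have hVo : IsOrth V := by
    have h1 := (Matrix.mem_unitaryGroup_iff).mp hA.eigenvectorUnitary.2
    have h2 := (Matrix.mem_unitaryGroup_iff').mp hA.eigenvectorUnitary.2
    constructor
    · rw [← conjTranspose_eq_transpose_of_trivial]; exact h1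
    · rw [← conjTranspose_eq_transpose_of_trivial]; exact h2
  set μ : Fin d → ℝ := hA.eigenvalues with hμ
  have hμ0 : ∀ i, 0 ≤ μ i := hP.eigenvalues_nonneg
  set σ : Fin d → ℝ := fun i => Real.sqrt (μ i) with hσ
  have hσ0 : ∀ i, 0 ≤ σ i := fun i => Real.sqrt_nonneg _
  have hspec : Cᵀ * C = V * Matrix.diagonal μ * Vᵀ := by
    have h := hA.spectral_theorem
    rw [h, Unitary.conjStarAlgAut_apply]
    exact congrArg₂ (· * ·) rfl (conjTranspose_eq_transpose_of_trivial _)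
  have hCV : (C * V)ᵀ * (C * V) = Matrix.diagonal μ := by
    have h1 : (C * V)ᵀ * (C * V) = Vᵀ * (Cᵀ * C) * V := by
      rw [transpose_mul]; noncomm_ring
    rw [h1, hspec]
    calc Vᵀ * (V * Matrix.diagonal μ * Vᵀ) * V
        = (Vᵀ * V) * Matrix.diagonal μ * (Vᵀ * V) := by noncomm_ring
      _ = Matrix.diagonal μ := by rw [hVo.2, one_mul, mul_one]
  -- columns of C*V
  set v : Fin d → EuclideanSpace ℝ (Fin d) := fun i => WithLp.toLp 2 (fun j => (σ i)⁻¹ * (C * V) j i) with hv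
  have hσpos : ∀ i, μ i ≠ 0 → 0 < σ i := fun i hi =>
    Real.sqrt_pos.mpr (lt_of_le_of_ne (hμ0 i) (Ne.symm hi))
  have hortho : Orthonormal ℝ (Set.restrict {i | μ i ≠ 0} v) := by
    rw [orthonormal_iff_ite]
    rintro ⟨i, hi⟩ ⟨j, hj⟩
    have hinner : (inner ℝ (v i) (v j) : ℝ) = (σ i)⁻¹ * (σ j)⁻¹ * ((C * V)ᵀ * (C * V)) i j := by
      simp only [PiLp.inner_apply, RCLike.inner_apply, starRingEnd_apply, star_trivial, hv, WithLp.ofLp_toLp]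
      rw [Matrix.mul_apply, Finset.mul_sum]
      refine Finset.sum_congr rfl fun k _ => ?_
      rw [transpose_apply]; ring
    show (inner ℝ (v i) (v j) : ℝ) = _
    rw [hinner, hCV, Matrix.diagonal_apply]
    by_cases h : i = j
    · subst h
      have hss : σ i * σ i = μ i := Real.mul_self_sqrt (hμ0 i)
      have hσne : σ i ≠ 0 := ne_of_gt (hσpos i hi)
      simp only [if_pos rfl]
      field_simp
      simp only [if_true, mul_one]
      nlinarith [hss]
    · have : (⟨i, hi⟩ : {i | μ i ≠ 0}) ≠ ⟨j, hj⟩ := by simpa using h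
      rw [if_neg h, if_neg this, mul_zero]
  obtain ⟨b, hb⟩ := hortho.exists_orthonormalBasis_extension_of_card_eq
    (by simp [finrank_euclideanSpace])
  set W : Matrix (Fin d) (Fin d) ℝ := fun j i => b i j with hW
  have hWtW : Wᵀ * W = 1 := by
    ext i k
    have hbo := b.orthonormal
    rw [orthonormal_iff_ite] at hbo
    have h2 := hbo i k
    simp only [PiLp.inner_apply, RCLike.inner_apply, starRingEnd_apply, star_trivial] at h2
    rw [Matrix.mul_apply, Matrix.one_apply]
    refine Eq.trans (Finset.sum_congr rfl fun x _ => ?_) h2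
    rw [transpose_apply]; exact mul_comm _ _
  have hWo : IsOrth W := ⟨mul_eq_one_comm.mp hWtW, hWtW⟩
  have hWD : W * Matrix.diagonal σ = C * V := by
    ext j i
    rw [Matrix.mul_diagonal]
    by_cases hi : μ i ≠ 0
    · have hbv : b i = v i := hb i hi
      have hwji : W j i = (σ i)⁻¹ * (C * V) j i := by
        have : W j i = b i j := rfl
        exact this.trans (congrArg (fun x : EuclideanSpace ℝ (Fin d) => x j) hbv)
      rw [hwji]
      have hσne : σ i ≠ 0 := ne_of_gt (hσpos i hi)
      field_simp
    · push_neg at hi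
      have hdiag : ((C * V)ᵀ * (C * V)) i i = 0 := by rw [hCV, Matrix.diagonal_apply_eq, hi]
      rw [Matrix.mul_apply] at hdiag
      have hcol : (C * V) j i = 0 := by
        have hterm := (Finset.sum_eq_zero_iff_of_nonneg
          (fun k _ => by rw [transpose_apply]; exact mul_self_nonneg _)).mp hdiag j
          (Finset.mem_univ j)
        rw [transpose_apply] at hterm
        exact mul_self_eq_zero.mp hterm
      have hσi : σ i = 0 := by rw [hσ]; simp [hi]
      rw [hσi, mul_zero, hcol]
  have hC : C = W * Matrix.diagonal σ * Vᵀ := by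
    rw [hWD, mul_assoc, hVo.1, mul_one]
  have hsqrt : sqrtPSD (Cᵀ * C) = V * Matrix.diagonal σ * Vᵀ := by
    have hDps : (Matrix.diagonal σ).PosSemidef := Matrix.posSemidef_diagonal_iff.mpr fun i => hσ0 i
    have hB : (V * Matrix.diagonal σ * Vᵀ).PosSemidef := by
      have := hDps.mul_mul_conjTranspose_same V
      rwa [conjTranspose_eq_transpose_of_trivial] at this
    have hsq : (V * Matrix.diagonal σ * Vᵀ) ^ 2 = Cᵀ * C := by
      rw [pow_two]
      calc (V * Matrix.diagonal σ * Vᵀ) * (V * Matrix.diagonal σ * Vᵀ)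
          = V * Matrix.diagonal σ * (Vᵀ * V) * (Matrix.diagonal σ * Vᵀ) := by noncomm_ring
        _ = V * (Matrix.diagonal σ * Matrix.diagonal σ) * Vᵀ := by
            rw [hVo.2, mul_one]; noncomm_ring
        _ = V * Matrix.diagonal μ * Vᵀ := by
            rw [Matrix.diagonal_mul_diagonal,
              show (fun i => σ i * σ i) = μ from funext fun i => Real.mul_self_sqrt (hμ0 i)]
        _ = Cᵀ * C := hspec.symm
    unfold sqrtPSD
    rw [dif_pos hP]
    exact congrArg₂ (· * ·) rfl (conjTranspose_eq_transpose_of_trivial _)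
  have htr : Matrix.trace (sqrtPSD (Cᵀ * C)) = ∑ i, σ i := by
    rw [hsqrt, Matrix.trace_mul_cycle, hVo.2, one_mul, Matrix.trace_diagonal]
  exact ⟨W, V, σ, hWo, hVo, hσ0, hC, htr⟩

lemma procrustes (C : Matrix (Fin d) (Fin d) ℝ) :
    IsGreatest {x : ℝ | ∃ Q, IsOrth Q ∧ x = Matrix.trace (Qᵀ * C)}
      (Matrix.trace (sqrtPSD (Cᵀ * C))) := by
  obtain ⟨W, V, σ, hW, hV, hσ0, hC, htr⟩ := exists_svd C
  constructor
  · refine ⟨W * Vᵀ, hW.mul hV.transpose, ?_⟩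
    rw [htr, hC]
    rw [show (W * Vᵀ)ᵀ * (W * Matrix.diagonal σ * Vᵀ)
        = V * ((Wᵀ * W) * Matrix.diagonal σ) * Vᵀ from by
      rw [transpose_mul, transpose_transpose]; noncomm_ring]
    rw [hW.2, one_mul, Matrix.trace_mul_cycle, hV.2, one_mul, Matrix.trace_diagonal]
  · rintro x ⟨Q, hQ, rfl⟩
    rw [htr, hC]
    set R := Vᵀ * Qᵀ * W with hR
    have hRo : IsOrth R := (hV.transpose.mul hQ.transpose).mul hW
    have hQC : Matrix.trace (Qᵀ * (W * Matrix.diagonal σ * Vᵀ))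
        = Matrix.trace (R * Matrix.diagonal σ) := by
      rw [show Qᵀ * (W * Matrix.diagonal σ * Vᵀ)
          = (Qᵀ * W * Matrix.diagonal σ) * Vᵀ from by noncomm_ring,
        Matrix.trace_mul_comm,
        show Vᵀ * (Qᵀ * W * Matrix.diagonal σ) = R * Matrix.diagonal σ from by
          rw [hR]; noncomm_ring]
    rw [hQC]
    rw [show Matrix.trace (R * Matrix.diagonal σ) = ∑ i, R i i * σ i from by
      simp [Matrix.trace, Matrix.diag, Matrix.mul_diagonal]]
    refine Finset.sum_le_sum fun i _ => ?_
    have h1 : (R * Rᵀ) i i = (1 : Matrix (Fin d) (Fin d) ℝ) i i := by rw [hRo.1]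
    rw [Matrix.mul_apply, Matrix.one_apply_eq] at h1
    simp only [transpose_apply] at h1
    have h2 : R i i * R i i ≤ 1 := by
      rw [← h1]
      exact Finset.single_le_sum (f := fun j => R i j * R i j)
        (fun j _ => mul_self_nonneg _) (Finset.mem_univ i)
    have h3 : R i i ≤ 1 := by nlinarith [mul_self_nonneg (R i i - 1), mul_self_nonneg (R i i + 1)]
    calc R i i * σ i ≤ 1 * σ i := mul_le_mul_of_nonneg_right h3 (hσ0 i)
      _ = σ i := one_mul _

lemma frobSq_sub {n : Type*} [Fintype n] [DecidableEq n] (L M O : Matrix n n ℝ) (hO : O * Oᵀ = 1) :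
    frobSq (L - M * O) = frobSq L + frobSq M - 2 * Matrix.trace (Oᵀ * (Mᵀ * L)) := by
  unfold frobSq
  rw [transpose_sub, sub_mul, mul_sub, mul_sub, Matrix.trace_sub, Matrix.trace_sub,
    Matrix.trace_sub, transpose_mul]
  have h1 : Matrix.trace (Lᵀ * (M * O)) = Matrix.trace (Oᵀ * (Mᵀ * L)) := by
    rw [← Matrix.trace_transpose (Lᵀ * (M * O)), transpose_mul, transpose_mul,
      transpose_transpose, mul_assoc]
  have h2 : Matrix.trace ((Oᵀ * Mᵀ) * (M * O)) = Matrix.trace (Mᵀ * M) := by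
    rw [show (Oᵀ * Mᵀ) * (M * O) = Oᵀ * (Mᵀ * M * O) from by noncomm_ring,
      Matrix.trace_mul_comm, mul_assoc, hO, mul_one]
  have h3 : Matrix.trace ((Oᵀ * Mᵀ) * L) = Matrix.trace (Oᵀ * (Mᵀ * L)) := by
    rw [mul_assoc]
  rw [h1, h2, h3]
  ring

lemma trace_blockDiag {d T : ℕ} (f : Fin T → Matrix (Fin d) (Fin d) ℝ)
    (C : Matrix (Fin d × Fin T) (Fin d × Fin T) ℝ) :
    Matrix.trace ((Matrix.blockDiagonal f)ᵀ * C)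
      = ∑ t, Matrix.trace ((f t)ᵀ * diagBlock C t) := by
  simp only [Matrix.trace, Matrix.diag, Matrix.mul_apply, transpose_apply, diagBlock,
    Matrix.blockDiagonal_apply, Fintype.sum_prod_type, ite_mul, zero_mul,
    Finset.sum_ite_eq, Finset.sum_ite_eq', Finset.mem_univ, if_true]
  rw [Finset.sum_comm]

lemma blockDiagonal_isOrth {d T : ℕ} (f : Fin T → Matrix (Fin d) (Fin d) ℝ)
    (hf : ∀ t, IsOrth (f t)) :
    Matrix.blockDiagonal f * (Matrix.blockDiagonal f)ᵀ = 1 := by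
  rw [Matrix.blockDiagonal_transpose, ← Matrix.blockDiagonal_mul,
    show (fun k => f k * (f k)ᵀ) = fun _ => (1 : Matrix (Fin d) (Fin d) ℝ) from
      funext fun k => (hf k).1]
  exact Matrix.blockDiagonal_one

/-- For `L, M ∈ 𝕃`, the optimal block Procrustes value is
`‖L‖_F² + ‖M‖_F² − 2 ∑_t tr((((MᵀL)_{t,t})ᵀ (MᵀL)_{t,t})^{1/2})`, i.e. it subtracts twice the
sum of the nuclear norms of the diagonal blocks of `MᵀL`. -/
theorem stmt4 (d T : ℕ) (hd : 0 < d) (hT : 0 < T)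
    (L M : Matrix (Fin d × Fin T) (Fin d × Fin T) ℝ)
    (hL : BlockLT L) (hM : BlockLT M) :
    IsLeast {x : ℝ | ∃ O, BlockOrth O ∧ x = frobSq (L - M * O)}
      (frobSq L + frobSq M -
        2 * ∑ t : Fin T,
          Matrix.trace (sqrtPSD ((diagBlock (Mᵀ * L) t)ᵀ * diagBlock (Mᵀ * L) t))) := by
  classical
  constructor
  · have hopt := fun t : Fin T => (procrustes (diagBlock (Mᵀ * L) t)).1
    choose f hf1 hf2 using hopt
    refine ⟨Matrix.blockDiagonal f, ⟨f, hf1, rfl⟩, ?_⟩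
    rw [frobSq_sub L M _ (blockDiagonal_isOrth f hf1), trace_blockDiag,
      show ∑ t, Matrix.trace ((f t)ᵀ * diagBlock (Mᵀ * L) t)
        = ∑ t, Matrix.trace (sqrtPSD ((diagBlock (Mᵀ * L) t)ᵀ * diagBlock (Mᵀ * L) t)) from
      Finset.sum_congr rfl fun t _ => (hf2 t).symm]
  · rintro x ⟨O, ⟨f, hf, rfl⟩, rfl⟩
    rw [frobSq_sub L M _ (blockDiagonal_isOrth f hf), trace_blockDiag]
    have hle : ∀ t : Fin T, Matrix.trace ((f t)ᵀ * diagBlock (Mᵀ * L) t)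
        ≤ Matrix.trace (sqrtPSD ((diagBlock (Mᵀ * L) t)ᵀ * diagBlock (Mᵀ * L) t)) :=
      fun t => (procrustes (diagBlock (Mᵀ * L) t)).2 ⟨f t, hf t, rfl⟩
    have h : ∑ t : Fin T, Matrix.trace ((f t)ᵀ * diagBlock (Mᵀ * L) t) ≤ ∑ t : Fin T, Matrix.trace (sqrtPSD ((diagBlock (Mᵀ * L) t)ᵀ * diagBlock (Mᵀ * L) t)) := Finset.sum_le_sum fun t _ => hle t
    linarith
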